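/- arXiv:2305.06004 — 5 statements merged into one kernel-verified Lean document; each statement's English description precedes it below -/
import Mathlib

section
/- Let n ≥ 2 be a natural number, let {cₖ}_{k=0}^∞ be a sequence of real numbers, and suppose there exist m ≥ 0 and ρ > 0 such that |cₖ| ≤ m·ρ^(−k) for all k ≥ 0. Then for every y > 0 and every natural number N, the truncation error of the series ∑_{k=0}^∞ (−1)^k cₖ · y^(n/2 + k)/Γ(n/2 + k + 1) after N terms satisfies |∑_{k=N+1}^∞ (−1)^k cₖ · y^(n/2 + k)/Γ(n/2 + k + 1)| ≤ m · (Γ(n/2)·(N+1)!)^(−1) · y^(n/2) · (y/ρ)^(N+1) · exp(y/ρ). -/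
open Real

private lemma gamma_fact_le (a : ℝ) (ha : 1 ≤ a) : ∀ j : ℕ,
    Real.Gamma a * (Nat.factorial j : ℝ) ≤ Real.Gamma (a + j + 1) := by
  have ha0 : 0 < a := lt_of_lt_of_le one_pos ha
  have hΓ : 0 < Real.Gamma a := Real.Gamma_pos_of_pos ha0
  intro j
  induction j with
  | zero =>
    simp only [Nat.factorial_zero, Nat.cast_one, mul_one, Nat.cast_zero, add_zero]
    rw [Real.Gamma_add_one (ne_of_gt ha0)]
    nlinarith
  | succ j ih =>
    have hpos : (0:ℝ) < a + j + 1 := by positivity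
    have hΓj1 : 0 < Real.Gamma (a + j + 1) := Real.Gamma_pos_of_pos hpos
    have e : a + ((j:ℝ) + 1) + 1 = (a + j + 1) + 1 := by ring
    push_cast [Nat.factorial_succ]
    rw [e, Real.Gamma_add_one (ne_of_gt hpos)]
    calc Real.Gamma a * (((j:ℝ) + 1) * (Nat.factorial j : ℝ))
        = ((j:ℝ) + 1) * (Real.Gamma a * (Nat.factorial j : ℝ)) := by ring
      _ ≤ ((j:ℝ) + 1) * Real.Gamma (a + j + 1) :=
          mul_le_mul_of_nonneg_left ih (by positivity)
      _ ≤ (a + j + 1) * Real.Gamma (a + j + 1) :=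
          mul_le_mul_of_nonneg_right (by linarith) hΓj1.le

/-- Truncation-error bound for the series expansion of the cdf: if `|cₖ| ≤ m ρ^(-k)`
with `ρ > 0`, then for every `y > 0` and every `N`, the tail of the series
`∑ₖ (-1)^k cₖ y^(n/2+k) / Γ(n/2+k+1)` after `N` terms is bounded by
`m (Γ(n/2) (N+1)!)⁻¹ y^(n/2) (y/ρ)^(N+1) exp(y/ρ)`. -/
theorem truncation_error_bound (n : ℕ) (hn : 2 ≤ n) (c : ℕ → ℝ) (m ρ : ℝ)
    (hm : 0 ≤ m) (hρ : 0 < ρ) (hb : ∀ k : ℕ, |c k| ≤ m * ρ ^ (-(k : ℤ)))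
    (y : ℝ) (hy : 0 < y) (N : ℕ) :
    |∑' k : ℕ,
        (-1 : ℝ) ^ (k + (N + 1)) * c (k + (N + 1)) *
          y ^ ((n : ℝ) / 2 + (k + (N + 1))) /
            Real.Gamma ((n : ℝ) / 2 + (k + (N + 1)) + 1)| ≤
      m * (Real.Gamma ((n : ℝ) / 2) * (Nat.factorial (N + 1) : ℝ))⁻¹ *
        y ^ ((n : ℝ) / 2) * (y / ρ) ^ (N + 1) * Real.exp (y / ρ) := by
  set a : ℝ := (n : ℝ) / 2 with ha_def
  have ha : 1 ≤ a := by
    rw [ha_def, le_div_iff₀ (by norm_num : (0:ℝ) < 2)]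
    exact_mod_cast hn
  have hΓa : 0 < Real.Gamma a := Real.Gamma_pos_of_pos (by linarith)
  set x : ℝ := y / ρ with hx_def
  have hx : 0 < x := div_pos hy hρ
  set f : ℕ → ℝ := fun k =>
    (-1 : ℝ) ^ (k + (N + 1)) * c (k + (N + 1)) *
      y ^ (a + ((k : ℝ) + ((N : ℝ) + 1))) /
        Real.Gamma (a + ((k : ℝ) + ((N : ℝ) + 1)) + 1) with hf_def
  set C : ℝ := m * y ^ a / Real.Gamma a with hC_def
  have hC : 0 ≤ C := by positivity
  set g : ℕ → ℝ := fun k =>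
    C * (x ^ (N + 1) / (Nat.factorial (N + 1) : ℝ) * (x ^ k / (Nat.factorial k : ℝ)))
    with hg_def
  -- key pointwise bound
  have hfg : ∀ k, |f k| ≤ g k := by
    intro k
    set j : ℕ := k + (N + 1) with hj_def
    have hjr : (j : ℝ) = (k : ℝ) + ((N : ℝ) + 1) := by rw [hj_def]; push_cast; ring
    have hΓj : 0 < Real.Gamma (a + j + 1) := Real.Gamma_pos_of_pos (by positivity)
    have habs : |f k| = |c j| * y ^ (a + (j:ℝ)) / Real.Gamma (a + (j:ℝ) + 1) := by
      rw [hf_def]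
      simp only [← hjr]
      rw [abs_div, abs_mul, abs_mul, abs_pow, abs_neg, abs_one, one_pow, one_mul,
        abs_of_pos hΓj, abs_of_pos (Real.rpow_pos_of_pos hy _)]
    rw [habs]
    have hcb : |c j| ≤ m / ρ ^ j := by
      have := hb j
      rwa [zpow_neg, zpow_natCast, ← one_div, mul_one_div] at this
    have hysplit : y ^ (a + (j:ℝ)) = y ^ a * y ^ j := by
      rw [Real.rpow_add hy, Real.rpow_natCast]
    have hfac : (Nat.factorial (N+1) : ℝ) * (Nat.factorial k : ℝ) ≤ (Nat.factorial j : ℝ) := by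
      have hd := Nat.factorial_mul_factorial_dvd_factorial_add (N+1) k
      have h2 : Nat.factorial (N+1) * Nat.factorial k ≤ Nat.factorial (N + 1 + k) :=
        Nat.le_of_dvd (Nat.factorial_pos _) hd
      have he : N + 1 + k = j := by omega
      rw [he] at h2
      exact_mod_cast h2
    have hΓbound : Real.Gamma a * ((Nat.factorial (N+1) : ℝ) * (Nat.factorial k : ℝ))
        ≤ Real.Gamma (a + j + 1) := by
      calc Real.Gamma a * ((Nat.factorial (N+1) : ℝ) * (Nat.factorial k : ℝ))
          ≤ Real.Gamma a * (Nat.factorial j : ℝ) :=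
            mul_le_mul_of_nonneg_left hfac hΓa.le
        _ ≤ Real.Gamma (a + j + 1) := gamma_fact_le a ha j
    have hxj : x ^ (N+1) * x ^ k = x ^ j := by rw [← pow_add]; congr 1; omega
    have hgk : g k = (m * y ^ a * x ^ j) /
        (Real.Gamma a * ((Nat.factorial (N+1) : ℝ) * (Nat.factorial k : ℝ))) := by
      rw [hg_def]
      simp only
      rw [div_mul_div_comm, hxj, hC_def]
      field_simp
    rw [hgk, hysplit]
    have hxpow : (x:ℝ) ^ j = y ^ j / ρ ^ j := by rw [hx_def, div_pow]
    have key : (m * y ^ a * x ^ j) / Real.Gamma (a + j + 1)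
        ≤ (m * y ^ a * x ^ j) /
          (Real.Gamma a * ((Nat.factorial (N+1) : ℝ) * (Nat.factorial k : ℝ))) :=
      div_le_div_of_nonneg_left (by positivity) (by positivity) hΓbound
    refine le_trans ?_ key
    rw [hxpow]
    have hlhs : |c j| * (y ^ a * y ^ j) / Real.Gamma (a + (j:ℝ) + 1)
        ≤ (m / ρ ^ j) * (y ^ a * y ^ j) / Real.Gamma (a + (j:ℝ) + 1) := by
      apply div_le_div_of_nonneg_right _ hΓj.le
      exact mul_le_mul_of_nonneg_right hcb (by positivity)
    refine hlhs.trans (le_of_eq ?_)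
    field_simp
  -- summability
  have hgsum : Summable g :=
    ((Real.summable_pow_div_factorial x).mul_left _).mul_left _
  have hfabs : Summable fun k => |f k| :=
    Summable.of_nonneg_of_le (fun k => abs_nonneg _) hfg hgsum
  have hfsum : Summable f := hfabs.of_abs
  have h1 : |∑' k, f k| ≤ ∑' k, |f k| := by
    have := norm_tsum_le_tsum_norm (f := f) (by simpa [Real.norm_eq_abs] using hfabs)
    simpa [Real.norm_eq_abs] using this
  have h2 : ∑' k, |f k| ≤ ∑' k, g k := Summable.tsum_le_tsum hfg hfabs hgsum
  have h3 : ∑' k, g k = C * (x ^ (N+1) / (Nat.factorial (N+1) : ℝ)) * Real.exp x := by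
    rw [hg_def, tsum_mul_left, tsum_mul_left, Real.exp_eq_exp_ℝ,
      NormedSpace.exp_eq_tsum_div]
    ring
  have goal_eq : m * (Real.Gamma a * (Nat.factorial (N + 1) : ℝ))⁻¹ * y ^ a * x ^ (N + 1)
        * Real.exp x
      = C * (x ^ (N+1) / (Nat.factorial (N+1) : ℝ)) * Real.exp x := by
    rw [hC_def]
    field_simp
  calc |∑' k, f k| ≤ ∑' k, g k := le_trans h1 h2
    _ = C * (x ^ (N+1) / (Nat.factorial (N+1) : ℝ)) * Real.exp x := h3
    _ = m * (Real.Gamma a * (Nat.factorial (N + 1) : ℝ))⁻¹ * y ^ a * x ^ (N + 1)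
        * Real.exp x := goal_eq.symm
end

section
/- Let H be an m×n real matrix, Q an m×m symmetric positive definite real matrix, and let Σ̄ and Σ_O be n×n symmetric positive definite real matrices. Set T = Σ̄·(Σ̄+Σ_O)^(−1)·Σ_O and K = T·Hᵀ·(H·T·Hᵀ + Q)^(−1). Then HᵀQ^(−1)H + Σ_O^(−1) + Σ̄^(−1) is invertible and (HᵀQ^(−1)H + Σ_O^(−1) + Σ̄^(−1))^(−1) = (I − K·H)·Σ̄·(Σ̄+Σ_O)^(−1)·Σ_O. -/
open Matrix

set_option maxHeartbeats 1000000

/-- Posterior covariance of the object-uncertainty-aware EKF update: with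
`T = Σ̄ (Σ̄+Σ_O)⁻¹ Σ_O` and `K = T Hᵀ (H T Hᵀ + Q)⁻¹`, the information matrix
`Hᵀ Q⁻¹ H + Σ_O⁻¹ + Σ̄⁻¹` is invertible and its inverse equals
`(I − K H) Σ̄ (Σ̄+Σ_O)⁻¹ Σ_O`. -/
theorem posterior_covariance_object_uncertainty {m n : ℕ}
    (H : Matrix (Fin m) (Fin n) ℝ) (Q : Matrix (Fin m) (Fin m) ℝ)
    (Sb SO : Matrix (Fin n) (Fin n) ℝ)
    (hQ : Q.PosDef) (hSb : Sb.PosDef) (hSO : SO.PosDef) :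
    IsUnit (Hᵀ * Q⁻¹ * H + SO⁻¹ + Sb⁻¹).det ∧
    (Hᵀ * Q⁻¹ * H + SO⁻¹ + Sb⁻¹)⁻¹ =
      (1 - (Sb * (Sb + SO)⁻¹ * SO) * Hᵀ *
          (H * (Sb * (Sb + SO)⁻¹ * SO) * Hᵀ + Q)⁻¹ * H) *
        Sb * (Sb + SO)⁻¹ * SO := by
  set T : Matrix (Fin n) (Fin n) ℝ := Sb * (Sb + SO)⁻¹ * SO with hT
  set S : Matrix (Fin m) (Fin m) ℝ := H * T * Hᵀ + Q with hS
  have hsum : (Sb + SO).PosDef := hSb.add hSO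
  have hsuminv : (Sb + SO) * (Sb + SO)⁻¹ = 1 :=
    mul_nonsing_inv _ (isUnit_iff_isUnit_det _ |>.mp hsum.isUnit)
  have hsuminv' : (Sb + SO)⁻¹ * (Sb + SO) = 1 :=
    nonsing_inv_mul _ (isUnit_iff_isUnit_det _ |>.mp hsum.isUnit)
  have e1 : T = SO - SO * (Sb + SO)⁻¹ * SO := by
    have h : T = (Sb + SO) * (Sb + SO)⁻¹ * SO - SO * (Sb + SO)⁻¹ * SO := by
      rw [hT]; noncomm_ring
    rw [h, hsuminv, one_mul]
  have e2 : SO * (Sb + SO)⁻¹ * Sb = SO - SO * (Sb + SO)⁻¹ * SO := by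
    have h : SO * (Sb + SO)⁻¹ * Sb = SO * ((Sb + SO)⁻¹ * (Sb + SO)) - SO * (Sb + SO)⁻¹ * SO := by
      noncomm_ring
    rw [h, hsuminv', mul_one]
  have hTsymm : T = SO * (Sb + SO)⁻¹ * Sb := e1.trans e2.symm
  have hTinv : T * (SO⁻¹ + Sb⁻¹) = 1 := by
    rw [mul_add]
    nth_rewrite 2 [hTsymm]
    rw [hT, mul_assoc (Sb * (Sb + SO)⁻¹) SO SO⁻¹,
      mul_nonsing_inv _ (isUnit_iff_isUnit_det _ |>.mp hSO.isUnit), mul_one,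
      mul_assoc (SO * (Sb + SO)⁻¹) Sb Sb⁻¹,
      mul_nonsing_inv _ (isUnit_iff_isUnit_det _ |>.mp hSb.isUnit), mul_one,
      ← add_mul, hsuminv]
  have hTi : T⁻¹ = SO⁻¹ + Sb⁻¹ := inv_eq_right_inv hTinv
  have hX : (SO⁻¹ + Sb⁻¹).PosDef := hSO.inv.add hSb.inv
  have hTpd : T.PosDef := by
    have h : T = (SO⁻¹ + Sb⁻¹)⁻¹ := (inv_eq_left_inv hTinv).symm
    rw [h]; exact hX.inv
  have hApsd : (Hᵀ * Q⁻¹ * H).PosSemidef := by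
    have := hQ.inv.posSemidef.conjTranspose_mul_mul_same H
    simpa using this
  have hMpd : (Hᵀ * Q⁻¹ * H + (SO⁻¹ + Sb⁻¹)).PosDef :=
    Matrix.PosDef.posSemidef_add hApsd hX
  have hMeq : Hᵀ * Q⁻¹ * H + SO⁻¹ + Sb⁻¹ = Hᵀ * Q⁻¹ * H + T⁻¹ := by
    rw [hTi, add_assoc]
  have hSpd : S.PosDef := by
    have h := hTpd.posSemidef.mul_mul_conjTranspose_same H
    rw [hS]
    exact Matrix.PosDef.posSemidef_add (by simpa using h) hQ
  have hSS : S * S⁻¹ = 1 := mul_nonsing_inv _ (isUnit_iff_isUnit_det _ |>.mp hSpd.isUnit)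
  have hQQ : Q⁻¹ * Q = 1 := nonsing_inv_mul _ (isUnit_iff_isUnit_det _ |>.mp hQ.isUnit)
  have hTT : T⁻¹ * T = 1 := nonsing_inv_mul _ (isUnit_iff_isUnit_det _ |>.mp hTpd.isUnit)
  have hHTH : H * T * Hᵀ = S - Q := by rw [hS]; noncomm_ring
  have key : Q⁻¹ * (H * (T * (Hᵀ * (S⁻¹ * (H * T))))) = Q⁻¹ * (H * T) - S⁻¹ * (H * T) := by
    rw [← Matrix.mul_assoc T Hᵀ, ← Matrix.mul_assoc H (T * Hᵀ), ← Matrix.mul_assoc H T Hᵀ,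
      hHTH, Matrix.sub_mul, ← Matrix.mul_assoc S S⁻¹, hSS, Matrix.one_mul,
      Matrix.mul_sub, ← Matrix.mul_assoc Q⁻¹ Q, hQQ, Matrix.one_mul]
  have hTT2 : ∀ X : Matrix (Fin n) (Fin n) ℝ, T⁻¹ * (T * X) = X := fun X => by
    rw [← Matrix.mul_assoc, hTT, Matrix.one_mul]
  have main : (Hᵀ * Q⁻¹ * H + T⁻¹) * ((1 - T * Hᵀ * S⁻¹ * H) * T) = 1 := by
    simp only [Matrix.sub_mul, Matrix.add_mul, Matrix.mul_sub, Matrix.one_mul,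
      Matrix.mul_assoc, hTT, hTT2, key]
    abel
  refine ⟨?_, ?_⟩
  · rw [add_assoc]
    exact isUnit_iff_isUnit_det _ |>.mp hMpd.isUnit
  · rw [hMeq]
    have hrhs : (1 - T * Hᵀ * S⁻¹ * H) * Sb * (Sb + SO)⁻¹ * SO
        = (1 - T * Hᵀ * S⁻¹ * H) * T := by
      rw [hT]; simp only [Matrix.mul_assoc]
    rw [hrhs]
    exact inv_eq_right_inv main
end

section
/- Let H be an m×n real matrix, Q an m×m symmetric positive definite real matrix, Σ̄ and Σ_O n×n symmetric positive definite real matrices, and let z, ĥ ∈ ℝᵐ and μ̄, μ_O ∈ ℝⁿ. Define the quadratic cost J(x) = (1/2)(z − ĥ − H(x−μ̄))ᵀ Q^(−1) (z − ĥ − H(x−μ̄)) + (1/2)(x−μ_O)ᵀ Σ_O^(−1) (x−μ_O) + (1/2)(x−μ̄)ᵀ Σ̄^(−1) (x−μ̄), and set Σ = (HᵀQ^(−1)H + Σ_O^(−1) + Σ̄^(−1))^(−1). Then the vector μ = μ̄ + Σ·Hᵀ·Q^(−1)·(z − ĥ) + Σ·Σ_O^(−1)·(μ_O − μ̄) is the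 unique global minimizer of J on ℝⁿ: J(μ) ≤ J(x) for all x, with equality only when x = μ. -/
/-!
The cost `J` is quadratic with Hessian `A = Hᵀ Q⁻¹ H + Σ_O⁻¹ + Σ̄⁻¹`, which is positive definite,
and `μ` is its stationary point: `A (μ - μ̄) = Hᵀ Q⁻¹ (z - ĥ) + Σ_O⁻¹ (μ_O - μ̄)` because `Σ = A⁻¹`.
Expanding each of the three quadratic terms around `μ`, the linear terms cancel by stationarity,
so `J x = J μ + ½ (x - μ)ᵀ A (x - μ)`.
-/

open Matrix

namespace Matrix

theorem PosDef.isSymm {n : Type*} {M : Matrix n n ℝ} (hM : M.PosDef) : M.IsSymm :=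
  isHermitian_iff_isSymm.mp hM.isHermitian

variable {ι κ R : Type*} [Fintype ι] [Fintype κ] [CommRing R]

theorem add_mulVec_dotProduct_mulVec_add_mulVec {P : Matrix κ κ R} (hP : P.IsSymm)
    (r : κ → R) (L : Matrix κ ι R) (d : ι → R) :
    (r + L *ᵥ d) ⬝ᵥ (P *ᵥ (r + L *ᵥ d)) =
      r ⬝ᵥ (P *ᵥ r) + 2 * (d ⬝ᵥ (Lᵀ *ᵥ (P *ᵥ r))) + d ⬝ᵥ ((Lᵀ * P * L) *ᵥ d) := by
  have hswap : ∀ u w : κ → R, u ⬝ᵥ (P *ᵥ w) = w ⬝ᵥ (P *ᵥ u) := fun u w => by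
    rw [dotProduct_mulVec, ← mulVec_transpose, hP.eq, dotProduct_comm]
  have hpull : ∀ (u : κ → R) (e : ι → R), (L *ᵥ e) ⬝ᵥ u = e ⬝ᵥ (Lᵀ *ᵥ u) := fun u e => by
    rw [dotProduct_comm, dotProduct_mulVec, ← mulVec_transpose, dotProduct_comm]
  rw [mulVec_add, dotProduct_add, add_dotProduct, add_dotProduct, hswap r (L *ᵥ d), hpull,
    hpull, ← mulVec_mulVec, ← mulVec_mulVec]
  ring

theorem add_dotProduct_mulVec_add {P : Matrix κ κ R} (hP : P.IsSymm) (r d : κ → R) :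
    (r + d) ⬝ᵥ (P *ᵥ (r + d)) = r ⬝ᵥ (P *ᵥ r) + 2 * (d ⬝ᵥ (P *ᵥ r)) + d ⬝ᵥ (P *ᵥ d) := by
  classical
  simpa using add_mulVec_dotProduct_mulVec_add_mulVec hP r 1 d

theorem PosDef.forall_le_and_eq_of_eq_add_quadratic {f : (ι → ℝ) → ℝ} {A : Matrix ι ι ℝ}
    (hA : A.PosDef) {μ : ι → ℝ} (hf : ∀ x, f x = f μ + (1 / 2) * ((x - μ) ⬝ᵥ (A *ᵥ (x - μ)))) :
    (∀ x, f μ ≤ f x) ∧ (∀ x, f x = f μ → x = μ) := by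
  have hpos : ∀ x, x ≠ μ → 0 < (x - μ) ⬝ᵥ (A *ᵥ (x - μ)) := fun x hx => by
    simpa using hA.dotProduct_mulVec_pos (sub_ne_zero.mpr hx)
  refine ⟨fun x => ?_, fun x hx => ?_⟩
  · rcases eq_or_ne x μ with rfl | hx
    · rfl
    · linarith [hf x, hpos x hx]
  · by_contra hne
    linarith [hf x, hpos x hne]

end Matrix

section

variable {ι κ : Type*} [Fintype ι] [Fintype κ]

/-- `Λ`, `ΛO`, `Λb` stand for the precisions `Q⁻¹`, `Σ_O⁻¹`, `Σ̄⁻¹` and `v` for the innovation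
`z - ĥ`. -/
noncomputable def negLogPosterior (H : Matrix κ ι ℝ) (Λ : Matrix κ κ ℝ) (ΛO Λb : Matrix ι ι ℝ)
    (v : κ → ℝ) (mub muO x : ι → ℝ) : ℝ :=
  (1 / 2) * ((v - H *ᵥ (x - mub)) ⬝ᵥ (Λ *ᵥ (v - H *ᵥ (x - mub)))) +
    (1 / 2) * ((x - muO) ⬝ᵥ (ΛO *ᵥ (x - muO))) + (1 / 2) * ((x - mub) ⬝ᵥ (Λb *ᵥ (x - mub)))

theorem negLogPosterior_eq_add_of_stationary {H : Matrix κ ι ℝ} {Λ : Matrix κ κ ℝ}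
    {ΛO Λb : Matrix ι ι ℝ} (hΛ : Λ.IsSymm) (hΛO : ΛO.IsSymm) (hΛb : Λb.IsSymm) {v : κ → ℝ}
    {mub muO μ : ι → ℝ}
    (hstat : (Hᵀ * Λ * H + ΛO + Λb) *ᵥ (μ - mub) = Hᵀ *ᵥ (Λ *ᵥ v) + ΛO *ᵥ (muO - mub))
    (x : ι → ℝ) :
    negLogPosterior H Λ ΛO Λb v mub muO x = negLogPosterior H Λ ΛO Λb v mub muO μ +
      (1 / 2) * ((x - μ) ⬝ᵥ ((Hᵀ * Λ * H + ΛO + Λb) *ᵥ (x - μ))) := by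
  set d := x - μ
  have hgrad : -(Hᵀ *ᵥ (Λ *ᵥ (v - H *ᵥ (μ - mub)))) + ΛO *ᵥ (μ - muO) + Λb *ᵥ (μ - mub) = 0 := by
    rw [show μ - muO = (μ - mub) - (muO - mub) by abel, ← sub_eq_zero.mpr hstat]
    simp only [mulVec_sub, add_mulVec, mulVec_mulVec, Matrix.mul_assoc]
    abel
  have hmeas : v - H *ᵥ (x - mub) = (v - H *ᵥ (μ - mub)) + (-H) *ᵥ d := by
    simp only [d, neg_mulVec, mulVec_sub]; abel
  have hobj : x - muO = (μ - muO) + d := by simp only [d]; abel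
  have hprior : x - mub = (μ - mub) + d := by simp only [d]; abel
  have hg := congrArg (d ⬝ᵥ ·) hgrad
  simp only [dotProduct_add, dotProduct_neg, dotProduct_zero] at hg
  rw [negLogPosterior, negLogPosterior, hmeas, hobj, hprior,
    add_mulVec_dotProduct_mulVec_add_mulVec hΛ, add_dotProduct_mulVec_add hΛO,
    add_dotProduct_mulVec_add hΛb]
  simp only [transpose_neg, neg_mulVec, Matrix.neg_mul, Matrix.mul_neg, neg_neg, dotProduct_neg,
    add_mulVec, dotProduct_add]
  linear_combination hg

end

/-- The object-uncertainty-aware posterior mean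
`μ = μ̄ + Σ Hᵀ Q⁻¹ (z − ĥ) + Σ Σ_O⁻¹ (μ_O − μ̄)`, with
`Σ = (Hᵀ Q⁻¹ H + Σ_O⁻¹ + Σ̄⁻¹)⁻¹`, is the unique global minimizer of the
Gaussian negative log-posterior
`J(x) = ½(z−ĥ−H(x−μ̄))ᵀQ⁻¹(z−ĥ−H(x−μ̄)) + ½(x−μ_O)ᵀΣ_O⁻¹(x−μ_O)
      + ½(x−μ̄)ᵀΣ̄⁻¹(x−μ̄)`. -/
theorem posterior_mean_minimizes_cost {m n : ℕ}
    (H : Matrix (Fin m) (Fin n) ℝ) (Q : Matrix (Fin m) (Fin m) ℝ)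
    (Sb SO : Matrix (Fin n) (Fin n) ℝ)
    (hQ : Q.PosDef) (hSb : Sb.PosDef) (hSO : SO.PosDef)
    (z hhat : Fin m → ℝ) (mub muO : Fin n → ℝ) :
    let J : (Fin n → ℝ) → ℝ := fun x =>
      (1 / 2) * ((z - hhat - H *ᵥ (x - mub)) ⬝ᵥ (Q⁻¹ *ᵥ (z - hhat - H *ᵥ (x - mub)))) +
      (1 / 2) * ((x - muO) ⬝ᵥ (SO⁻¹ *ᵥ (x - muO))) +
      (1 / 2) * ((x - mub) ⬝ᵥ (Sb⁻¹ *ᵥ (x - mub)))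
    let Spost : Matrix (Fin n) (Fin n) ℝ := (Hᵀ * Q⁻¹ * H + SO⁻¹ + Sb⁻¹)⁻¹
    let μ : Fin n → ℝ :=
      mub + (Spost * Hᵀ * Q⁻¹) *ᵥ (z - hhat) + (Spost * SO⁻¹) *ᵥ (muO - mub)
    (∀ x : Fin n → ℝ, J μ ≤ J x) ∧ (∀ x : Fin n → ℝ, J x = J μ → x = μ) := by
  intro J Spost μ
  set A := Hᵀ * Q⁻¹ * H + SO⁻¹ + Sb⁻¹
  have hA : A.PosDef := by
    simpa using PosDef.posSemidef_add
      ((hQ.inv.posSemidef.conjTranspose_mul_mul_same H).add hSO.inv.posSemidef) hSb.inv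
  have hstat : A *ᵥ (μ - mub) = Hᵀ *ᵥ (Q⁻¹ *ᵥ (z - hhat)) + SO⁻¹ *ᵥ (muO - mub) := by
    have hμ : μ - mub = Spost *ᵥ (Hᵀ *ᵥ (Q⁻¹ *ᵥ (z - hhat)) + SO⁻¹ *ᵥ (muO - mub)) := by
      simp only [μ, mulVec_add, mulVec_mulVec, Matrix.mul_assoc]
      abel
    rw [hμ, mulVec_mulVec, mul_nonsing_inv A ((isUnit_iff_isUnit_det A).mp hA.isUnit), one_mulVec]
  exact hA.forall_le_and_eq_of_eq_add_quadratic
    (negLogPosterior_eq_add_of_stationary hQ.inv.isSymm hSO.inv.isSymm hSb.inv.isSymm hstat)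
end

section
/- Let H be an m×n real matrix, Q an m×m symmetric positive definite real matrix, and Σ̄ an n×n symmetric positive definite real matrix. For c > 0, model the object-location covariance as Σ_O = c·I and define the modified Kalman gain K(c) = Σ̄·(Σ̄+c·I)^(−1)·(c·I)·Hᵀ·(H·Σ̄·(Σ̄+c·I)^(−1)·(c·I)·Hᵀ + Q)^(−1). Then K(c) tends to the standard EKF gain as c → ∞: lim_{c→∞} K(c) = Σ̄·Hᵀ·(H·Σ̄·Hᵀ + Q)^(−1) (limit in the topology of real matrices). -/
open Matrix Filter

private lemma continuousAt_mul_matrix {X : Type*} [TopologicalSpace X]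
    {a b c : ℕ} {f : X → Matrix (Fin a) (Fin b) ℝ} {g : X → Matrix (Fin b) (Fin c) ℝ}
    {x : X} (hf : ContinuousAt f x) (hg : ContinuousAt g x) :
    ContinuousAt (fun y => f y * g y) x := by
  have hc : Continuous fun p : Matrix (Fin a) (Fin b) ℝ × Matrix (Fin b) (Fin c) ℝ =>
      p.1 * p.2 := continuous_fst.matrix_mul continuous_snd
  exact hc.continuousAt.comp (hf.prodMk hg)

private lemma continuousAt_Ring_inverse_real {x : ℝ} (hx : x ≠ 0) :
    ContinuousAt Ring.inverse x := by
  have : (Ring.inverse : ℝ → ℝ) = Inv.inv := funext Ring.inverse_eq_inv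
  rw [this]
  exact continuousAt_inv₀ hx

/-- As the object-location covariance `Σ_O = c·I` grows without bound, the
object-uncertainty-aware Kalman gain
`K(c) = Σ̄(Σ̄+cI)⁻¹(cI) Hᵀ (H Σ̄(Σ̄+cI)⁻¹(cI) Hᵀ + Q)⁻¹`
tends to the standard EKF gain `Σ̄ Hᵀ (H Σ̄ Hᵀ + Q)⁻¹`. -/
theorem kalman_gain_limit_object_uncertainty {m n : ℕ}
    (H : Matrix (Fin m) (Fin n) ℝ) (Q : Matrix (Fin m) (Fin m) ℝ)
    (Sb : Matrix (Fin n) (Fin n) ℝ) (hQ : Q.PosDef) (hSb : Sb.PosDef) :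
    Tendsto
      (fun c : ℝ =>
        Sb * (Sb + c • (1 : Matrix (Fin n) (Fin n) ℝ))⁻¹ *
            (c • (1 : Matrix (Fin n) (Fin n) ℝ)) * Hᵀ *
          (H * (Sb * (Sb + c • (1 : Matrix (Fin n) (Fin n) ℝ))⁻¹ *
              (c • (1 : Matrix (Fin n) (Fin n) ℝ))) * Hᵀ + Q)⁻¹)
      atTop (nhds (Sb * Hᵀ * (H * Sb * Hᵀ + Q)⁻¹)) := by
  -- positive definiteness of the limiting innovation covariance
  have hHSH : (H * Sb * Hᵀ + Q).PosDef := by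
    have h1 : (H * Sb * Hᵀ).PosSemidef := by
      have := hSb.posSemidef.mul_mul_conjTranspose_same H
      rwa [conjTranspose_eq_transpose_of_trivial] at this
    exact Matrix.PosDef.posSemidef_add h1 hQ
  -- auxiliary function of t = 1/c
  set φ : ℝ → Matrix (Fin n) (Fin m) ℝ := fun t =>
    Sb * (t • Sb + 1)⁻¹ * Hᵀ *
      (H * (Sb * (t • Sb + 1)⁻¹) * Hᵀ + Q)⁻¹ with hφ
  have h0 : (0 : ℝ) • Sb + 1 = (1 : Matrix (Fin n) (Fin n) ℝ) := by simp
  -- continuity of φ at 0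
  have hA : ContinuousAt (fun t : ℝ => t • Sb + 1) 0 :=
    ((continuous_id.smul continuous_const).add continuous_const).continuousAt
  have hAinv : ContinuousAt (fun t : ℝ => (t • Sb + 1)⁻¹) 0 := by
    have hi : ContinuousAt Inv.inv ((0 : ℝ) • Sb + 1) := by
      rw [h0]
      exact continuousAt_matrix_inv 1
        (by rw [det_one]; exact continuousAt_Ring_inverse_real one_ne_zero)
    exact ContinuousAt.comp (g := Inv.inv) (f := fun t : ℝ => t • Sb + 1) hi hA
  have hM : ContinuousAt (fun t : ℝ => Sb * (t • Sb + 1)⁻¹) 0 :=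
    continuousAt_mul_matrix continuousAt_const hAinv
  have hInner : ContinuousAt (fun t : ℝ => H * (Sb * (t • Sb + 1)⁻¹) * Hᵀ + Q) 0 :=
    (continuousAt_mul_matrix (continuousAt_mul_matrix continuousAt_const hM)
      continuousAt_const).add continuousAt_const
  have hInner0 : H * (Sb * (((0 : ℝ) • Sb + 1)⁻¹)) * Hᵀ + Q = H * Sb * Hᵀ + Q := by
    rw [h0, inv_one, mul_one]
  have hInnerInv : ContinuousAt (fun t : ℝ => (H * (Sb * (t • Sb + 1)⁻¹) * Hᵀ + Q)⁻¹) 0 := by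
    have hi : ContinuousAt Inv.inv (H * (Sb * (((0 : ℝ) • Sb + 1)⁻¹)) * Hᵀ + Q) := by
      rw [hInner0]
      exact continuousAt_matrix_inv _
        (continuousAt_Ring_inverse_real hHSH.det_pos.ne')
    exact ContinuousAt.comp (g := Inv.inv)
      (f := fun t : ℝ => H * (Sb * (t • Sb + 1)⁻¹) * Hᵀ + Q) hi hInner
  have hφcont : ContinuousAt φ 0 := by
    exact continuousAt_mul_matrix
      (continuousAt_mul_matrix hM continuousAt_const) hInnerInv
  have hφ0 : φ 0 = Sb * Hᵀ * (H * Sb * Hᵀ + Q)⁻¹ := by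
    simp only [hφ, h0, inv_one, mul_one, mul_assoc]
  -- the limit along atTop of φ ∘ (·⁻¹)
  have hlim : Tendsto (fun c : ℝ => φ c⁻¹) atTop (nhds (Sb * Hᵀ * (H * Sb * Hᵀ + Q)⁻¹)) := by
    rw [← hφ0]
    exact hφcont.tendsto.comp tendsto_inv_atTop_zero
  -- eventual equality with the original expression
  refine hlim.congr' ?_
  filter_upwards [eventually_gt_atTop (0 : ℝ)] with c hc
  have hcI : (c • (1 : Matrix (Fin n) (Fin n) ℝ)).PosSemidef := by
    rw [smul_one_eq_diagonal]
    exact posSemidef_diagonal_iff.mpr fun _ => hc.le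
  set A : Matrix (Fin n) (Fin n) ℝ := Sb + c • 1 with hAdef
  have hApd : A.PosDef := hSb.add_posSemidef hcI
  have hAunit : IsUnit A.det := hApd.det_pos.ne'.isUnit
  have h2 : c⁻¹ • Sb + 1 = c⁻¹ • A := by
    rw [hAdef, smul_add, smul_smul, inv_mul_cancel₀ hc.ne', one_smul]
  have h3 : (c⁻¹ • A) * (A⁻¹ * (c • (1 : Matrix (Fin n) (Fin n) ℝ))) = 1 := by
    rw [Matrix.smul_mul, ← mul_assoc, Matrix.mul_nonsing_inv _ hAunit, one_mul,
      smul_smul, inv_mul_cancel₀ hc.ne', one_smul]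
  have key : A⁻¹ * (c • (1 : Matrix (Fin n) (Fin n) ℝ)) = (c⁻¹ • Sb + 1)⁻¹ := by
    rw [h2]
    exact (Matrix.inv_eq_right_inv h3).symm
  have hMc : Sb * A⁻¹ * (c • (1 : Matrix (Fin n) (Fin n) ℝ)) = Sb * (c⁻¹ • Sb + 1)⁻¹ := by
    rw [mul_assoc, key]
  show Sb * (c⁻¹ • Sb + 1)⁻¹ * Hᵀ *
      (H * (Sb * (c⁻¹ • Sb + 1)⁻¹) * Hᵀ + Q)⁻¹ = _
  rw [hMc]
end

section
/- Let H be an m×n real matrix, Q an m×m symmetric positive definite real matrix, Σ̄ an n×n symmetric positive definite real matrix, and let z, ĥ ∈ ℝᵐ and μ̄, μ_O ∈ ℝⁿ. For c > 0, define Σ(c) = (HᵀQ^(−1)H + (1/c)·I + Σ̄^(−1))^(−1) and the object-uncertainty-aware posterior mean μ(c) = μ̄ + Σ(c)·Hᵀ·Q^(−1)·(z − ĥ) + Σ(c)·((1/c)·I)·(μ_O − μ̄). Then lim_{c→∞} μ(c) = μ̄ + (HᵀQ^(−1)H + Σ̄^(−1))^(−1)·Hᵀ·Q^(−1)·(z −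 ĥ); in particular the object-uncertainty correction term Σ(c)·((1/c)·I)·(μ_O − μ̄) tends to 0, and the posterior mean reduces to the standard EKF update. -/
/-!
As `c → ∞` the information matrix `HᵀQ⁻¹H + c⁻¹ I + Σ̄⁻¹` tends to `HᵀQ⁻¹H + Σ̄⁻¹`, which is
positive definite and hence invertible; by continuity of matrix inversion at invertible
matrices `Σ(c)` converges to the EKF covariance. The correction term is `c⁻¹ Σ(c)(μ_O − μ̄)`,
a bounded matrix times a vanishing scalar, so it tends to `0`.
-/

open Matrix Filter Topology

namespace Matrix

variable {n : Type*} [Fintype n] [DecidableEq n]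

theorem tendsto_inv_add_inv_smul_one_atTop {A : Matrix n n ℝ} (hA : IsUnit A) :
    Tendsto (fun c : ℝ => (A + c⁻¹ • (1 : Matrix n n ℝ))⁻¹) atTop (𝓝 A⁻¹) := by
  have hcont : ContinuousAt Inv.inv A := by
    refine continuousAt_matrix_inv A ?_
    rw [Ring.inverse_eq_inv']
    exact continuousAt_inv₀ ((isUnit_iff_isUnit_det A).mp hA).ne_zero
  have hlim : Tendsto (fun c : ℝ => A + c⁻¹ • (1 : Matrix n n ℝ)) atTop (𝓝 A) := by
    simpa using
      tendsto_const_nhds.add ((tendsto_inv_atTop_zero (𝕜 := ℝ)).smul_const (1 : Matrix n n ℝ))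
  exact hcont.tendsto.comp hlim

theorem tendsto_mul_inv_smul_one_mulVec_atTop_zero {S : ℝ → Matrix n n ℝ} {L : Matrix n n ℝ}
    (hS : Tendsto S atTop (𝓝 L)) (v : n → ℝ) :
    Tendsto (fun c : ℝ => (S c * (c⁻¹ • (1 : Matrix n n ℝ))) *ᵥ v) atTop (𝓝 0) := by
  have hmat : Tendsto (fun c : ℝ => c⁻¹ • S c) atTop (𝓝 0) := by
    simpa using tendsto_inv_atTop_zero.smul hS
  have hcont : Continuous fun M : Matrix n n ℝ => M *ᵥ v :=
    continuous_id.matrix_mulVec continuous_const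
  simpa [Function.comp_def, mul_smul_comm] using (hcont.tendsto 0).comp hmat

end Matrix

/-- As the object-location covariance `Σ_O = c·I` grows without bound, the
object-uncertainty-aware posterior mean
`μ(c) = μ̄ + Σ(c) Hᵀ Q⁻¹ (z − ĥ) + Σ(c)((1/c)I)(μ_O − μ̄)`, with
`Σ(c) = (Hᵀ Q⁻¹ H + (1/c)I + Σ̄⁻¹)⁻¹`, tends to the standard EKF posterior mean
`μ̄ + (Hᵀ Q⁻¹ H + Σ̄⁻¹)⁻¹ Hᵀ Q⁻¹ (z − ĥ)`; in particular the object-uncertainty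
correction term tends to `0`. -/
theorem posterior_mean_limit_object_uncertainty {m n : ℕ}
    (H : Matrix (Fin m) (Fin n) ℝ) (Q : Matrix (Fin m) (Fin m) ℝ)
    (Sb : Matrix (Fin n) (Fin n) ℝ) (hQ : Q.PosDef) (hSb : Sb.PosDef)
    (z hhat : Fin m → ℝ) (mub muO : Fin n → ℝ) :
    let S : ℝ → Matrix (Fin n) (Fin n) ℝ := fun c =>
      (Hᵀ * Q⁻¹ * H + c⁻¹ • (1 : Matrix (Fin n) (Fin n) ℝ) + Sb⁻¹)⁻¹
    Tendsto
      (fun c : ℝ =>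
        mub + (S c * Hᵀ * Q⁻¹) *ᵥ (z - hhat) +
          (S c * (c⁻¹ • (1 : Matrix (Fin n) (Fin n) ℝ))) *ᵥ (muO - mub))
      atTop
      (nhds (mub + ((Hᵀ * Q⁻¹ * H + Sb⁻¹)⁻¹ * Hᵀ * Q⁻¹) *ᵥ (z - hhat))) ∧
    Tendsto
      (fun c : ℝ =>
        (S c * (c⁻¹ • (1 : Matrix (Fin n) (Fin n) ℝ))) *ᵥ (muO - mub))
      atTop (nhds 0) := by
  intro S
  have hInfo : (Hᵀ * Q⁻¹ * H + Sb⁻¹).PosDef := by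
    have hPSD := hQ.posSemidef.inv.conjTranspose_mul_mul_same H
    rw [conjTranspose_eq_transpose_of_trivial] at hPSD
    exact PosDef.posSemidef_add hPSD hSb.inv
  have hS : Tendsto S atTop (𝓝 (Hᵀ * Q⁻¹ * H + Sb⁻¹)⁻¹) := by
    simpa only [S, add_right_comm] using tendsto_inv_add_inv_smul_one_atTop hInfo.isUnit
  have hCorrection := tendsto_mul_inv_smul_one_mulVec_atTop_zero hS (muO - mub)
  have hGain : Continuous fun M : Matrix (Fin n) (Fin n) ℝ => (M * Hᵀ * Q⁻¹) *ᵥ (z - hhat) :=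
    ((continuous_id.matrix_mul continuous_const).matrix_mul continuous_const).matrix_mulVec
      continuous_const
  refine ⟨?_, hCorrection⟩
  simpa using (tendsto_const_nhds.add ((hGain.tendsto _).comp hS)).add hCorrection
end
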